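/- arXiv:2602.11948 — 9 statements merged into one kernel-verified Lean document; each statement's English description precedes it below -/
import Mathlib

section
/- Let α > 0 and s_0 > 0 with s_0 ∉ αℤ, and let k = ⌊s_0/α⌋. Then the sign dynamics started at s_0 satisfies: for every t ≤ k, s_t = s_0 − tα; and for every t ≥ k, s_t ∈ {s_0 − kα, s_0 − (k+1)α} with s_{t+1} ≠ s_t (a 2-cycle), where s_0 − kα ∈ (0, α) and s_0 − (k+1)α ∈ (−α, 0). In particular, |s_t| < α and hence (1/2)s_t² < α²/2 for all t ≥ k. -/
/-- The sign function: `1` if `x > 0`, `-1` if `x < 0`, `0` if `x = 0`. -/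
noncomputable def sgn (x : ℝ) : ℝ := if 0 < x then 1 else if x < 0 then -1 else 0

/-- Let `α > 0` and `s 0 > 0` with `s 0 ∉ αℤ`, and let `k = ⌊s 0 / α⌋`. Then the sign
dynamics satisfies: `s t = s 0 - t * α` for `t ≤ k`; for `t ≥ k` the iterates form a
2-cycle on `{s 0 - k * α, s 0 - (k+1) * α}` with `s 0 - k * α ∈ (0, α)` and
`s 0 - (k+1) * α ∈ (-α, 0)`; in particular `|s t| < α` and `(1/2) * (s t)^2 < α^2 / 2`
for all `t ≥ k`. -/
theorem sign_dynamics_two_cycle (α : ℝ) (hα : 0 < α) (s : ℕ → ℝ)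
    (hs : ∀ t, s (t + 1) = s t - α * sgn (s t))
    (hs0 : 0 < s 0) (hgrid : ∀ k : ℤ, s 0 ≠ k * α)
    (k : ℕ) (hk : (k : ℤ) = ⌊s 0 / α⌋) :
    (∀ t ≤ k, s t = s 0 - t * α) ∧
    (∀ t ≥ k, (s t = s 0 - k * α ∨ s t = s 0 - (k + 1) * α) ∧ s (t + 1) ≠ s t) ∧
    (0 < s 0 - k * α ∧ s 0 - k * α < α) ∧
    (-α < s 0 - (k + 1) * α ∧ s 0 - (k + 1) * α < 0) ∧
    (∀ t ≥ k, |s t| < α ∧ (1 / 2) * (s t) ^ 2 < α ^ 2 / 2) := by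
  have hle : (k : ℝ) * α ≤ s 0 := by
    have h1 : ((k : ℤ) : ℝ) ≤ s 0 / α := by rw [hk]; exact Int.floor_le _
    have := (le_div_iff₀ hα).mp (by exact_mod_cast h1)
    linarith
  have hne : s 0 ≠ (k : ℝ) * α := by
    have := hgrid (k : ℤ); push_cast at this; exact this
  have ha : 0 < s 0 - (k : ℝ) * α := by
    rcases lt_or_eq_of_le hle with h | h
    · linarith
    · exact absurd h.symm hne
  have hlt : s 0 < ((k : ℝ) + 1) * α := by
    have h1 : s 0 / α < (k : ℤ) + 1 := by rw [hk]; exact Int.lt_floor_add_one _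
    have := (div_lt_iff₀ hα).mp (by exact_mod_cast h1)
    push_cast at this; linarith
  have ha' : s 0 - (k : ℝ) * α < α := by nlinarith
  have hb : s 0 - ((k : ℝ) + 1) * α < 0 := by nlinarith
  have hb' : -α < s 0 - ((k : ℝ) + 1) * α := by nlinarith
  have hlin : ∀ t ≤ k, s t = s 0 - t * α := by
    intro t ht
    induction t with
    | zero => simp
    | succ n ih =>
      have hn : n ≤ k := Nat.le_of_succ_le ht
      have hnk : (n : ℝ) + 1 ≤ (k : ℝ) := by exact_mod_cast ht
      have hsn := ih hn
      have hpos : 0 < s n := by rw [hsn]; nlinarith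
      rw [hs n, sgn, if_pos hpos, hsn]
      push_cast; ring
  have hstep_pos : ∀ t, s t = s 0 - (k : ℝ) * α → s (t + 1) = s 0 - ((k : ℝ) + 1) * α := by
    intro t h
    rw [hs t, h, sgn, if_pos ha]; ring
  have hstep_neg : ∀ t, s t = s 0 - ((k : ℝ) + 1) * α → s (t + 1) = s 0 - (k : ℝ) * α := by
    intro t h
    rw [hs t, h, sgn, if_neg (by linarith), if_pos hb]; ring
  have hcyc : ∀ t ≥ k, s t = s 0 - (k : ℝ) * α ∨ s t = s 0 - ((k : ℝ) + 1) * α := by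
    intro t ht
    induction t, ht using Nat.le_induction with
    | base => left; exact hlin k le_rfl
    | succ n hn ih =>
      rcases ih with h | h
      · right; exact hstep_pos n h
      · left; exact hstep_neg n h
  refine ⟨hlin, ?_, ⟨ha, ha'⟩, ⟨hb', hb⟩, ?_⟩
  · intro t ht
    rcases hcyc t ht with h | h
    · refine ⟨Or.inl h, ?_⟩
      rw [hstep_pos t h, h]; intro hc; linarith
    · refine ⟨Or.inr h, ?_⟩
      rw [hstep_neg t h, h]; intro hc; linarith
  · intro t ht
    have habs : |s t| < α := by
      rcases hcyc t ht with h | h <;> rw [h, abs_lt] <;> constructor <;> linarith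
    refine ⟨habs, ?_⟩
    have := sq_lt_sq' (by linarith [abs_lt.mp habs]) (abs_lt.mp habs).2
    nlinarith [(abs_lt.mp habs).1, (abs_lt.mp habs).2]
end

section
/- Let d ≥ 1, α > 0, let U, V ∈ ℝ^{d×d} be orthogonal matrices, for each i let (s_{t,i})_{t≥0} be the sign dynamics with step size α started at s_{0,i}, and let W_t := U·diag(s_{t,1},…,s_{t,d})·Vᵀ. Then for all t ∈ ℕ, (1/2)‖W_t‖_F² ≥ (1/2)Σ_{i=1}^d dist(0, s_{0,i} + αℤ)², where dist(0, s_{0,i} + αℤ) = inf_{k∈ℤ} |s_{0,i} + kα|. In particular, if s_{0,i} ∉ αℤ for some i, then inf_t (1/2)‖W_t‖_F² > 0, so the iterates never reach arbitrarily small loss levels. -/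
open Matrix

/-- With `W t = U * diagonal (s t) * Vᵀ` where each `s · i` follows the sign dynamics,
the loss `(1/2) * ‖W t‖_F^2` is bounded below by
`(1/2) * ∑ i, dist(0, s 0 i + αℤ)^2` for all `t`; in particular, if `s 0 i ∉ αℤ` for
some `i`, then the infimum over `t` of the loss is positive. -/
theorem muon_isotropic_quadratic_loss_floor (d : ℕ) (hd : 1 ≤ d) (α : ℝ) (hα : 0 < α)
    (U V : Matrix (Fin d) (Fin d) ℝ)
    (hU : Uᵀ * U = 1) (hV : Vᵀ * V = 1)
    (s : ℕ → Fin d → ℝ)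
    (hs : ∀ t i, s (t + 1) i = s t i - α * sgn (s t i))
    (W : ℕ → Matrix (Fin d) (Fin d) ℝ)
    (hW : ∀ t, W t = U * Matrix.diagonal (s t) * Vᵀ) :
    (∀ t, (1 / 2) * ∑ i, (⨅ k : ℤ, |s 0 i + k * α|) ^ 2
        ≤ (1 / 2) * Matrix.trace ((W t)ᵀ * W t)) ∧
    ((∃ i, ∀ k : ℤ, s 0 i ≠ k * α) →
      0 < ⨅ t : ℕ, (1 / 2) * Matrix.trace ((W t)ᵀ * W t)) := by
  -- trace computation
  have key : ∀ t, Matrix.trace ((W t)ᵀ * W t) = ∑ i, (s t i) ^ 2 := by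
    intro t
    rw [hW]
    have h1 : (U * Matrix.diagonal (s t) * Vᵀ)ᵀ = V * (Matrix.diagonal (s t) * Uᵀ) := by
      rw [transpose_mul, transpose_mul, transpose_transpose, diagonal_transpose]
    rw [h1]
    have h2 : V * (Matrix.diagonal (s t) * Uᵀ) * (U * Matrix.diagonal (s t) * Vᵀ)
        = V * (Matrix.diagonal (s t) * Matrix.diagonal (s t)) * Vᵀ := by
      calc V * (Matrix.diagonal (s t) * Uᵀ) * (U * Matrix.diagonal (s t) * Vᵀ)
          = V * Matrix.diagonal (s t) * (Uᵀ * U) * Matrix.diagonal (s t) * Vᵀ := by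
            simp only [Matrix.mul_assoc]
        _ = V * (Matrix.diagonal (s t) * Matrix.diagonal (s t)) * Vᵀ := by
            rw [hU]; simp only [Matrix.mul_assoc, Matrix.one_mul]
    rw [h2, Matrix.trace_mul_cycle, ← Matrix.mul_assoc, hV, Matrix.one_mul,
      Matrix.diagonal_mul_diagonal, Matrix.trace_diagonal]
    exact Finset.sum_congr rfl fun i _ => (sq (s t i)).symm
  -- coset invariance
  have coset : ∀ t i, ∃ k : ℤ, s t i = s 0 i + k * α := by
    intro t i
    induction t with
    | zero => exact ⟨0, by simp⟩
    | succ t ih =>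
      obtain ⟨k, hk⟩ := ih
      have : ∃ e : ℤ, sgn (s t i) = (e : ℝ) := by
        unfold sgn
        split_ifs
        · exact ⟨1, by norm_num⟩
        · exact ⟨-1, by norm_num⟩
        · exact ⟨0, by norm_num⟩
      obtain ⟨e, he⟩ := this
      refine ⟨k - e, ?_⟩
      rw [hs, he, hk]
      push_cast
      ring
  have bdd : ∀ x : ℝ, BddBelow (Set.range fun k : ℤ => |x + k * α|) :=
    fun x => ⟨0, by rintro y ⟨k, rfl⟩; positivity⟩
  have inf_nonneg : ∀ x : ℝ, 0 ≤ ⨅ k : ℤ, |x + k * α| :=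
    fun x => le_ciInf fun k => abs_nonneg _
  have inf_le : ∀ t i, (⨅ k : ℤ, |s 0 i + k * α|) ≤ |s t i| := by
    intro t i
    obtain ⟨k, hk⟩ := coset t i
    rw [hk]
    exact ciInf_le (bdd _) k
  have part1 : ∀ t, (1 / 2) * ∑ i, (⨅ k : ℤ, |s 0 i + k * α|) ^ 2
      ≤ (1 / 2) * Matrix.trace ((W t)ᵀ * W t) := by
    intro t
    rw [key t]
    have : ∀ i ∈ Finset.univ, (⨅ k : ℤ, |s 0 i + k * α|) ^ 2 ≤ (s t i) ^ 2 := by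
      intro i _
      rw [← sq_abs (s t i)]
      exact pow_le_pow_left₀ (inf_nonneg _) (inf_le t i) 2
    nlinarith [Finset.sum_le_sum this]
  refine ⟨part1, ?_⟩
  rintro ⟨i, hi⟩
  set x := s 0 i with hx
  set r := x - (⌊x / α⌋ : ℝ) * α with hr
  have h0 : 0 ≤ r := Int.sub_floor_div_mul_nonneg x hα
  have hne : r ≠ 0 := by
    intro h
    apply hi ⌊x / α⌋
    rw [hr] at h
    linarith
  have hr0 : 0 < r := lt_of_le_of_ne h0 (Ne.symm hne)
  have hr1 : r < α := Int.sub_floor_div_mul_lt x hα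
  have lower : ∀ k : ℤ, min r (α - r) ≤ |x + k * α| := by
    intro k
    have hrepr : x + k * α = r + ((⌊x / α⌋ + k : ℤ) : ℝ) * α := by
      rw [hr]; push_cast; ring
    rcases le_or_gt 0 (⌊x / α⌋ + k) with hm | hm
    · have hmr : (0 : ℝ) ≤ ((⌊x / α⌋ + k : ℤ) : ℝ) := by exact_mod_cast hm
      have h1 : r ≤ x + k * α := by
        rw [hrepr]
        nlinarith [mul_nonneg hmr hα.le]
      exact (min_le_left _ _).trans (h1.trans (le_abs_self _))
    · have hm1 : (⌊x / α⌋ + k : ℤ) ≤ -1 := by omega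
      have hmr : ((⌊x / α⌋ + k : ℤ) : ℝ) ≤ -1 := by exact_mod_cast hm1
      have h1 : x + k * α ≤ r - α := by
        rw [hrepr]
        nlinarith
      have h2 : α - r ≤ -(x + k * α) := by linarith
      exact (min_le_right _ _).trans (h2.trans (neg_le_abs _))
  have hinf_pos : 0 < ⨅ k : ℤ, |x + k * α| :=
    lt_of_lt_of_le (lt_min hr0 (by linarith)) (le_ciInf lower)
  have hsum_pos : 0 < (1 / 2) * ∑ j, (⨅ k : ℤ, |s 0 j + k * α|) ^ 2 := by
    have : 0 < ∑ j, (⨅ k : ℤ, |s 0 j + k * α|) ^ 2 := by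
      apply Finset.sum_pos' (fun j _ => by positivity)
      exact ⟨i, Finset.mem_univ i, by positivity⟩
    linarith
  exact lt_of_lt_of_le hsum_pos (le_ciInf part1)
end

section
/- Let α > 0, s_0 ∈ ℝ, ε > 0, and let (s_t) be the sign dynamics started at s_0. If for some t ∈ ℕ the loss satisfies (1/2)s_t² ≤ ε, then t·α ≥ |s_0| − √(2ε). Consequently, reaching loss level ε from s_0 requires at least (|s_0| − √(2ε))/α iterations; in particular, when α = O(√ε) the time to reach loss ε is Ω(1/√ε). -/
/-- If at some time `t` the sign dynamics achieves loss `(1/2) * (s t)^2 ≤ ε`, then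
`t * α ≥ |s 0| - √(2ε)`; consequently, reaching loss level `ε` from `s 0` requires at
least `(|s 0| - √(2ε)) / α` iterations. -/
theorem sign_dynamics_hitting_time_lower_bound (α ε : ℝ) (hα : 0 < α) (hε : 0 < ε)
    (s : ℕ → ℝ) (hs : ∀ t, s (t + 1) = s t - α * sgn (s t))
    (t : ℕ) (ht : (1 / 2) * (s t) ^ 2 ≤ ε) :
    |s 0| - Real.sqrt (2 * ε) ≤ t * α ∧ (|s 0| - Real.sqrt (2 * ε)) / α ≤ t := by
  have hsgn : ∀ x : ℝ, |sgn x| ≤ 1 := by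
    intro x
    unfold sgn
    split_ifs <;> simp
  have hstep : ∀ n, |s 0| ≤ |s n| + n * α := by
    intro n
    induction n with
    | zero => simp
    | succ n ih =>
      have h1 : |s (n + 1) - s n| ≤ α := by
        rw [hs n]
        have := hsgn (s n)
        calc |s n - α * sgn (s n) - s n| = |α * sgn (s n)| := by ring_nf; rw [abs_neg]
          _ = α * |sgn (s n)| := by rw [abs_mul, abs_of_pos hα]
          _ ≤ α * 1 := by nlinarith
          _ = α := by ring
      have h2 : |s n| ≤ |s (n + 1)| + α := by
        have := abs_sub_abs_le_abs_sub (s n) (s (n + 1))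
        rw [abs_sub_comm] at this
        linarith
      calc |s 0| ≤ |s n| + n * α := ih
        _ ≤ |s (n + 1)| + α + n * α := by linarith
        _ = |s (n + 1)| + (n + 1 : ℕ) * α := by push_cast; ring
  have hst : |s t| ≤ Real.sqrt (2 * ε) := by
    have h1 : (s t) ^ 2 ≤ 2 * ε := by linarith
    calc |s t| = Real.sqrt ((s t) ^ 2) := by rw [Real.sqrt_sq_eq_abs]
      _ ≤ Real.sqrt (2 * ε) := Real.sqrt_le_sqrt h1
  have main : |s 0| - Real.sqrt (2 * ε) ≤ t * α := by
    have := hstep t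
    linarith
  exact ⟨main, by rwa [div_le_iff₀ hα]⟩
end

section
/- Let d₁, d₂ ≥ 1, d = min(d₁, d₂), and let L : ℝ^{d₁×d₂} → ℝ be differentiable with gradient ∇L (identified with a matrix via the Frobenius inner product) satisfying the Λ-smoothness inequality L(W') ≤ L(W) + ⟨∇L(W), W' − W⟩ + (Λ/2)‖W' − W‖_F² for all W, W'. Suppose W_{t+1} = W_t − α_t·U_t V_tᵀ, where α_t > 0, U_t ∈ ℝ^{d₁×d} and V_t ∈ ℝ^{d₂×d} have orthonormal columns (U_tᵀU_t = I_d, V_tᵀV_t = I_d), and ∇L(W_t) = U_t·diag(σ_{t,1},…,σ_{t,d})·V_tᵀ with σ_{t,i} ≥ 0. Then L(W_{t+1}) ≤ L(W_t) − α_t·Σ_{i=1}^d σ_{t,i} + (Λ/2)·d·α_t². -/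
open Matrix

/-- Descent lemma for the exact Stiefel/polar (spectral-norm LMO) update: if `L` is
`Λ`-smooth (w.r.t. the Frobenius inner product, with gradient map `G`) and
`W (t+1) = W t - a t • (U t * (V t)ᵀ)` where `G (W t) = U t * diagonal (σv t) * (V t)ᵀ`
is an SVD (`U t`, `V t` with orthonormal columns, `σv t i ≥ 0`), then
`L (W (t+1)) ≤ L (W t) - a t * ∑ i, σv t i + (Λ/2) * d * (a t)^2` with `d = min d₁ d₂`. -/
theorem muon_descent_lemma (d₁ d₂ : ℕ) (h1 : 1 ≤ d₁) (h2 : 1 ≤ d₂) (Λ : ℝ)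
    (L : Matrix (Fin d₁) (Fin d₂) ℝ → ℝ)
    (G : Matrix (Fin d₁) (Fin d₂) ℝ → Matrix (Fin d₁) (Fin d₂) ℝ)
    (hsmooth : ∀ X Y, L Y ≤ L X + Matrix.trace ((G X)ᵀ * (Y - X))
      + Λ / 2 * Matrix.trace ((Y - X)ᵀ * (Y - X)))
    (W : ℕ → Matrix (Fin d₁) (Fin d₂) ℝ)
    (a : ℕ → ℝ) (ha : ∀ t, 0 < a t)
    (U : ℕ → Matrix (Fin d₁) (Fin (min d₁ d₂)) ℝ)
    (V : ℕ → Matrix (Fin d₂) (Fin (min d₁ d₂)) ℝ)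
    (σv : ℕ → Fin (min d₁ d₂) → ℝ) (hσ : ∀ t i, 0 ≤ σv t i)
    (hU : ∀ t, (U t)ᵀ * U t = 1) (hV : ∀ t, (V t)ᵀ * V t = 1)
    (hG : ∀ t, G (W t) = U t * Matrix.diagonal (σv t) * (V t)ᵀ)
    (hupd : ∀ t, W (t + 1) = W t - a t • (U t * (V t)ᵀ)) :
    ∀ t, L (W (t + 1)) ≤ L (W t) - a t * ∑ i, σv t i
      + Λ / 2 * (min d₁ d₂ : ℝ) * (a t) ^ 2 := by

  intro t
  have hd : W (t + 1) - W t = -(a t) • (U t * (V t)ᵀ) := by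
    rw [hupd t]; module
  have key := hsmooth (W t) (W (t + 1))
  rw [hd, hG t] at key
  have h1' : Matrix.trace ((U t * Matrix.diagonal (σv t) * (V t)ᵀ)ᵀ *
      (-(a t) • (U t * (V t)ᵀ))) = -(a t) * ∑ i, σv t i := by
    rw [Matrix.mul_smul, Matrix.trace_smul]
    congr 1
    simp only [Matrix.transpose_mul, Matrix.transpose_transpose,
      Matrix.diagonal_transpose, Matrix.mul_assoc]
    rw [← Matrix.mul_assoc ((U t)ᵀ), hU t, Matrix.one_mul, Matrix.trace_mul_comm,
      Matrix.mul_assoc, hV t, Matrix.mul_one, Matrix.trace_diagonal]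
  have h2' : Matrix.trace ((-(a t) • (U t * (V t)ᵀ))ᵀ * (-(a t) • (U t * (V t)ᵀ)))
      = (min d₁ d₂ : ℝ) * (a t) ^ 2 := by
    rw [Matrix.transpose_smul, Matrix.smul_mul, Matrix.mul_smul, Matrix.trace_smul,
      Matrix.trace_smul, Matrix.transpose_mul, Matrix.transpose_transpose]
    have : Matrix.trace (V t * (U t)ᵀ * (U t * (V t)ᵀ))
        = (min d₁ d₂ : ℝ) := by
      calc Matrix.trace (V t * (U t)ᵀ * (U t * (V t)ᵀ))
          = Matrix.trace (V t * ((U t)ᵀ * U t) * (V t)ᵀ) := by simp [Matrix.mul_assoc]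
        _ = Matrix.trace ((V t)ᵀ * V t) := by
            rw [hU t, Matrix.mul_one, Matrix.trace_mul_comm]
        _ = (min d₁ d₂ : ℝ) := by rw [hV t, Matrix.trace_one]; simp
    rw [this]; simp [smul_eq_mul]; ring
  rw [h1', h2'] at key
  calc L (W (t + 1)) ≤ _ := key
    _ = L (W t) - a t * ∑ i, σv t i + Λ / 2 * (min d₁ d₂ : ℝ) * (a t) ^ 2 := by ring
end

section
/- Under the setup of the Λ-smooth exact Stiefel/polar update (W_{t+1} = W_t − α_t·U_t V_tᵀ with ∇L(W_t) = U_t·diag(σ_{t,1},…,σ_{t,d})·V_tᵀ, σ_{t,i} ≥ 0, U_tᵀU_t = V_tᵀV_t = I_d, α_t > 0), assume additionally that L is bounded below by L_* = inf_W L(W) > −∞. Then for every T ≥ 1: min_{0≤t≤T−1} Σ_{i=1}^d σ_{t,i} ≤ (L(W_0) − L_*)/(Σ_{t=0}^{T−1} α_t) + (Λ/2)·d·(Σ_{t=0}^{T−1} α_t²)/(Σ_{t=0}^{T−1} α_t). -/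
open Matrix Finset

/-!
Smoothness bounds one step from `W` to `W - α • U Vᵀ` by `L W - α ⟨∇L W, U Vᵀ⟩ + (Λ/2) α² ‖U Vᵀ‖_F²`.
Orthonormality of the columns of `U` and `V` makes `⟨U diag σ Vᵀ, U Vᵀ⟩ = ∑ σᵢ` (the nuclear norm) and
`‖U Vᵀ‖_F² = d`. Summing the per-step descent telescopes to
`∑ αₜ ‖∇L Wₜ‖_* ≤ L W₀ - L_* + (Λ/2) d ∑ αₜ²`, and the left side is at least
`(minₜ ‖∇L Wₜ‖_*) ∑ αₜ`.
-/

namespace Matrix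

variable {m n k R : Type*} [Fintype m] [Fintype n] [Fintype k] [DecidableEq k] [CommRing R]

theorem trace_svd_transpose_mul_polar {U : Matrix m k R} {V : Matrix n k R}
    (hU : Uᵀ * U = 1) (hV : Vᵀ * V = 1) (σ : k → R) :
    trace ((U * diagonal σ * Vᵀ)ᵀ * (U * Vᵀ)) = ∑ i, σ i := by
  have hsvd : (U * diagonal σ * Vᵀ)ᵀ * (U * Vᵀ) = V * diagonal σ * Vᵀ := by
    simp only [transpose_mul, transpose_transpose, diagonal_transpose, Matrix.mul_assoc]
    rw [← Matrix.mul_assoc Uᵀ, hU, Matrix.one_mul]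
  rw [hsvd, trace_mul_cycle, hV, Matrix.one_mul, trace_diagonal]

theorem trace_polar_transpose_mul_self {U : Matrix m k R} {V : Matrix n k R}
    (hU : Uᵀ * U = 1) (hV : Vᵀ * V = 1) :
    trace ((U * Vᵀ)ᵀ * (U * Vᵀ)) = Fintype.card k := by
  rw [transpose_mul, transpose_transpose, Matrix.mul_assoc, ← Matrix.mul_assoc Uᵀ, hU,
    Matrix.one_mul, trace_mul_comm, hV, trace_one]

end Matrix

theorem Finset.inf'_mul_sum_le_sum_mul {ι R : Type*} [CommSemiring R] [LinearOrder R]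
    [IsOrderedRing R] {s : Finset ι} (hs : s.Nonempty) (f a : ι → R)
    (ha : ∀ i ∈ s, 0 ≤ a i) :
    s.inf' hs f * ∑ i ∈ s, a i ≤ ∑ i ∈ s, a i * f i := by
  rw [mul_sum]
  refine sum_le_sum fun i hi => ?_
  rw [mul_comm]
  exact mul_le_mul_of_nonneg_left (inf'_le f hi) (ha i hi)

theorem sum_mul_le_of_descent {f a g c : ℕ → ℝ} {fstar : ℝ}
    (hstep : ∀ t, f (t + 1) ≤ f t - a t * g t + c t) (T : ℕ) (hlb : fstar ≤ f T) :
    ∑ t ∈ range T, a t * g t ≤ f 0 - fstar + ∑ t ∈ range T, c t := by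
  have htele : ∑ t ∈ range T, (f (t + 1) - f t) = f T - f 0 := sum_range_sub f T
  have hsum : ∑ t ∈ range T, (f (t + 1) - f t) ≤ ∑ t ∈ range T, (c t - a t * g t) :=
    sum_le_sum fun t _ => by linarith [hstep t]
  rw [htele, sum_sub_distrib] at hsum
  linarith

/-- Stationarity bound for the exact Stiefel/polar update with varying step sizes:
under `Λ`-smoothness and boundedness below (`Lstar = inf L`), for every `T ≥ 1`,
`min_{0 ≤ t ≤ T-1} ∑ i, σv t i ≤ (L (W 0) - Lstar) / (∑_{t<T} a t)
  + (Λ/2) * d * (∑_{t<T} (a t)^2) / (∑_{t<T} a t)`. -/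
theorem muon_stationarity_bound (d₁ d₂ : ℕ) (Λ : ℝ)
    (L : Matrix (Fin d₁) (Fin d₂) ℝ → ℝ)
    (G : Matrix (Fin d₁) (Fin d₂) ℝ → Matrix (Fin d₁) (Fin d₂) ℝ)
    (hsmooth : ∀ X Y, L Y ≤ L X + Matrix.trace ((G X)ᵀ * (Y - X))
      + Λ / 2 * Matrix.trace ((Y - X)ᵀ * (Y - X)))
    (Lstar : ℝ) (hLstarLB : ∀ X, Lstar ≤ L X)
    (W : ℕ → Matrix (Fin d₁) (Fin d₂) ℝ)
    (a : ℕ → ℝ) (ha : ∀ t, 0 < a t)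
    (U : ℕ → Matrix (Fin d₁) (Fin (min d₁ d₂)) ℝ)
    (V : ℕ → Matrix (Fin d₂) (Fin (min d₁ d₂)) ℝ)
    (σv : ℕ → Fin (min d₁ d₂) → ℝ)
    (hU : ∀ t, (U t)ᵀ * U t = 1) (hV : ∀ t, (V t)ᵀ * V t = 1)
    (hG : ∀ t, G (W t) = U t * Matrix.diagonal (σv t) * (V t)ᵀ)
    (hupd : ∀ t, W (t + 1) = W t - a t • (U t * (V t)ᵀ))
    (T : ℕ) (hT : 1 ≤ T) :
    (Finset.range T).inf' (Finset.nonempty_range_iff.mpr (by omega))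
        (fun t => ∑ i, σv t i)
      ≤ (L (W 0) - Lstar) / (∑ t ∈ Finset.range T, a t)
        + Λ / 2 * (min d₁ d₂ : ℝ) *
          (∑ t ∈ Finset.range T, (a t) ^ 2) / (∑ t ∈ Finset.range T, a t) := by
  have hstep : ∀ t, L (W (t + 1)) ≤ L (W t) - a t * ∑ i, σv t i
      + Λ / 2 * (min d₁ d₂ : ℝ) * a t ^ 2 := by
    intro t
    have hdiff : W (t + 1) - W t = (-a t) • (U t * (V t)ᵀ) := by
      rw [hupd t, sub_sub_cancel_left, neg_smul]
    have h := hsmooth (W t) (W (t + 1))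
    rw [hdiff, hG t, transpose_smul, Matrix.mul_smul,
      Matrix.smul_mul, Matrix.mul_smul, trace_smul, trace_smul, trace_smul,
      trace_svd_transpose_mul_polar (hU t) (hV t), trace_polar_transpose_mul_self (hU t) (hV t),
      Fintype.card_fin] at h
    simp only [smul_eq_mul, Nat.cast_min] at h
    linarith
  have hA : 0 < ∑ t ∈ range T, a t :=
    sum_pos (fun t _ => ha t) (nonempty_range_iff.mpr (by omega))
  rw [← add_div, le_div_iff₀ hA, mul_sum _ _ (Λ / 2 * _)]
  calc _ ≤ ∑ t ∈ range T, a t * ∑ i, σv t i :=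
        inf'_mul_sum_le_sum_mul _ _ _ fun t _ => (ha t).le
    _ ≤ _ := sum_mul_le_of_descent (f := fun t => L (W t)) hstep T (hLstarLB (W T))
end

section
/- Fix α > 0 and σ > 0, and let γ denote the standard Gaussian N(0,1) measure on ℝ. Then there exists R > 0 such that for every w ∈ ℝ with |w| ≥ R, the one-step drift of the noisy sign dynamics satisfies ∫ |w − α(sign(w) + σu)| dγ(u) ≤ |w| − α/2. -/
open MeasureTheory ProbabilityTheory

section Helpers

open Real
open scoped NNReal ENNReal

lemma integrable_pow_gaussian (n : ℕ) :
    Integrable (fun x : ℝ => x ^ n) (gaussianReal 0 1) := by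
  rw [gaussianReal_of_var_ne_zero 0 one_ne_zero,
    integrable_withDensity_iff (measurable_gaussianPDF 0 1)
      (Filter.Eventually.of_forall fun x => ENNReal.ofReal_lt_top)]
  have h := integrable_rpow_mul_exp_neg_mul_sq (b := 2⁻¹) (s := (n : ℝ)) (by norm_num)
    (lt_of_lt_of_le (by norm_num : (-1:ℝ) < 0) (Nat.cast_nonneg n))
  refine (h.const_mul ((Real.sqrt (2 * Real.pi * (1:ℝ≥0)))⁻¹)).congr
    (Filter.Eventually.of_forall fun x => ?_)
  simp only [gaussianPDF_def]
  rw [ENNReal.toReal_ofReal (gaussianPDFReal_nonneg 0 1 x)]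
  simp only [gaussianPDFReal, Real.rpow_natCast]
  have : -(x - 0) ^ 2 / (2 * ((1:ℝ≥0) : ℝ)) = -2⁻¹ * x ^ 2 := by push_cast; ring
  rw [this]
  ring

lemma integrable_id_gaussian : Integrable (fun x : ℝ => x) (gaussianReal 0 1) := by
  have hint : Integrable (fun x : ℝ => 1 + x ^ 2) (gaussianReal 0 1) :=
    (integrable_const (1:ℝ)).add (integrable_pow_gaussian 2)
  refine hint.mono measurable_id.aestronglyMeasurable (Filter.Eventually.of_forall fun x => ?_)
  simp only [norm_eq_abs]
  rw [abs_of_nonneg (by positivity : (0:ℝ) ≤ 1 + x ^ 2)]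
  nlinarith [sq_abs x, sq_nonneg (|x| - 1)]

lemma gaussian_map_neg :
    Measure.map (fun x : ℝ => -x) (gaussianReal 0 1) = gaussianReal 0 1 := by
  have h := gaussianReal_map_const_mul (μ := 0) (v := 1) (-1)
  simp only [neg_one_mul, mul_zero, neg_zero] at h
  convert h using 2
  ext
  norm_num

lemma integral_id_gaussian : ∫ x, x ∂(gaussianReal 0 1) = 0 := by
  have h := integral_map (μ := gaussianReal 0 1) (φ := fun x : ℝ => -x) (f := fun x : ℝ => x)
    measurable_neg.aemeasurable (by rw [gaussian_map_neg]; exact measurable_id.aestronglyMeasurable)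
  rw [gaussian_map_neg, integral_neg] at h
  linarith

lemma key_bound (b a c : ℝ) (hb : 0 < b) (hc : 0 < c) (h : b * c ≤ a) :
    ∫ u, |a - b * u| ∂(gaussianReal 0 1)
      ≤ a + 2 * b * (∫ u, u ^ 2 ∂(gaussianReal 0 1)) / c := by
  set γ := gaussianReal 0 1
  have hid := integrable_id_gaussian
  have hsq := integrable_pow_gaussian 2
  have hind : Integrable ((Set.Ioi c).indicator (fun x : ℝ => x)) γ :=
    hid.indicator measurableSet_Ioi
  have hlin : Integrable (fun u : ℝ => a - b * u) γ :=
    (integrable_const a).sub (hid.const_mul b)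
  have hind2 : Integrable (fun u : ℝ => 2 * b * ((Set.Ioi c).indicator (fun x : ℝ => x) u)) γ :=
    hind.const_mul (2 * b)
  have habs : Integrable (fun u => |a - b * u|) γ := hlin.abs
  have hg : Integrable (fun u => a - b * u + 2 * b * ((Set.Ioi c).indicator (fun x : ℝ => x) u)) γ :=
    hlin.add hind2
  have hpt : ∀ u, |a - b * u| ≤ a - b * u + 2 * b * ((Set.Ioi c).indicator (fun x : ℝ => x) u) := by
    intro u
    by_cases hu : u ∈ Set.Ioi c
    · rw [Set.indicator_of_mem hu]
      have hu' : c < u := hu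
      have h0 : 0 ≤ a := le_trans (by positivity) h
      rw [abs_le]
      constructor <;> nlinarith
    · rw [Set.indicator_of_notMem hu]
      have hu' : u ≤ c := le_of_not_gt hu
      have : b * u ≤ a := le_trans (by nlinarith) h
      rw [abs_of_nonneg (by linarith)]
      linarith
  have h1 : ∫ u, |a - b * u| ∂γ
      ≤ ∫ u, (a - b * u + 2 * b * ((Set.Ioi c).indicator (fun x : ℝ => x) u)) ∂γ :=
    integral_mono habs hg hpt
  have h2 : ∫ u, (a - b * u + 2 * b * ((Set.Ioi c).indicator (fun x : ℝ => x) u)) ∂γ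
      = a + 2 * b * ∫ u, (Set.Ioi c).indicator (fun x : ℝ => x) u ∂γ := by
    rw [integral_add hlin hind2, integral_sub (integrable_const a) (hid.const_mul b),
      integral_const, integral_const_mul, integral_const_mul, integral_id_gaussian]
    simp
  have htail : ∫ u, (Set.Ioi c).indicator (fun x : ℝ => x) u ∂γ
      ≤ (∫ u, u ^ 2 ∂γ) / c := by
    have : ∫ u, (Set.Ioi c).indicator (fun x : ℝ => x) u ∂γ ≤ ∫ u, u ^ 2 / c ∂γ := by
      refine integral_mono hind (hsq.div_const c) fun u => ?_
      by_cases hu : u ∈ Set.Ioi c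
      · rw [Set.indicator_of_mem hu]
        have hu' : c < u := hu
        rw [le_div_iff₀ hc]
        nlinarith
      · rw [Set.indicator_of_notMem hu]
        positivity
    rwa [integral_div] at this
  have hK : 0 ≤ 2 * b := by positivity
  calc ∫ u, |a - b * u| ∂γ ≤ _ := h1
    _ = a + 2 * b * ∫ u, (Set.Ioi c).indicator (fun x : ℝ => x) u ∂γ := h2
    _ ≤ a + 2 * b * ((∫ u, u ^ 2 ∂γ) / c) := by
        have := mul_le_mul_of_nonneg_left htail hK
        linarith
    _ = a + 2 * b * (∫ u, u ^ 2 ∂γ) / c := by ring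

lemma key_bound' (b a c : ℝ) (hb : 0 < b) (hc : 0 < c) (h : b * c ≤ a) :
    ∫ u, |a + b * u| ∂(gaussianReal 0 1)
      ≤ a + 2 * b * (∫ u, u ^ 2 ∂(gaussianReal 0 1)) / c := by
  have heq : ∫ u, |a + b * u| ∂(gaussianReal 0 1) = ∫ u, |a - b * u| ∂(gaussianReal 0 1) := by
    have h := integral_map (μ := gaussianReal 0 1) (φ := fun x : ℝ => -x)
      (f := fun u : ℝ => |a - b * u|) measurable_neg.aemeasurable
      (by rw [gaussian_map_neg]
          exact ((measurable_const.sub (measurable_id.const_mul b)).abs).aestronglyMeasurable)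
    rw [gaussian_map_neg] at h
    simp only [mul_neg, sub_neg_eq_add] at h
    exact h.symm
  rw [heq]
  exact key_bound b a c hb hc h

end Helpers

/-- Drift-to-compact estimate: for `α > 0` and `σ > 0`, there exists `R > 0` such that
for every `w` with `|w| ≥ R`, the one-step expected absolute value of the noisy sign
dynamics satisfies `∫ |w - α * (sgn w + σ * u)| dγ(u) ≤ |w| - α / 2`, where `γ` is the
standard Gaussian measure. -/
theorem noisy_sign_dynamics_drift
    (α σ : ℝ) (hα : 0 < α) (hσ : 0 < σ) :
    ∃ R > 0, ∀ w : ℝ, R ≤ |w| →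
      ∫ u, |w - α * (sgn w + σ * u)| ∂(gaussianReal 0 1) ≤ |w| - α / 2 := by
  set K := ∫ u, u ^ 2 ∂(gaussianReal 0 1) with hK
  have hK0 : 0 ≤ K := integral_nonneg fun u => sq_nonneg u
  set b := α * σ with hbdef
  have hbpos : 0 < b := mul_pos hα hσ
  set c := 4 * σ * K + 1 with hcdef
  have hcpos : 0 < c := by positivity
  refine ⟨α + b * c, by positivity, fun w hw => ?_⟩
  have htail : 2 * b * K / c ≤ α / 2 := by
    rw [div_le_iff₀ hcpos]
    rw [hbdef, hcdef]
    nlinarith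
  have ha : b * c ≤ |w| - α := by linarith
  have hw0 : 0 < |w| := lt_of_lt_of_le (by positivity) hw
  rcases (abs_pos.mp hw0).lt_or_gt with hneg | hpos
  · have hs : sgn w = -1 := by
      rw [sgn, if_neg (not_lt.mpr hneg.le), if_pos hneg]
    have heq : (fun u => |w - α * (sgn w + σ * u)|) = fun u => |(|w| - α) + b * u| := by
      funext u
      rw [hs, abs_of_neg hneg, show w - α * (-1 + σ * u) = -(-w - α + b * u) by
        rw [hbdef]; ring, abs_neg]
    rw [heq]
    have := key_bound' b (|w| - α) c hbpos hcpos ha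
    linarith
  · have hs : sgn w = 1 := by rw [sgn, if_pos hpos]
    have heq : (fun u => |w - α * (sgn w + σ * u)|) = fun u => |(|w| - α) - b * u| := by
      funext u
      rw [hs, abs_of_pos hpos, show w - α * (1 + σ * u) = w - α - b * u by rw [hbdef]; ring]
    rw [heq]
    have := key_bound b (|w| - α) c hbpos hcpos ha
    linarith
end

section
/- Let α > 0, σ > 0, ε > 0, Δ > 0, N ∈ ℕ. Let (u_n)_{0≤n≤N} satisfy the deterministic sign dynamics u_{n+1} = u_n − α·sign(u_n) with margin |u_n| ≥ ε + Δ for all 0 ≤ n ≤ N. Let ξ_1,…,ξ_N be real numbers with |σ·Σ_{k=1}^n ξ_k| ≤ Δ/(2α) for all 1 ≤ n ≤ N, and define v_0 = u_0 and v_{n+1} = v_n − α(sign(v_n) + σ·ξ_{n+1}). Then for every 0 ≤ n ≤ N: v_n − u_n = −α·σ·Σ_{k=1}^n ξ_k, sign(v_n) = sign(u_n), and |v_n| ≥ ε + Δ/2 > ε. -/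
/-- Deterministic shadowing lemma: if the deterministic sign dynamics `u` keeps margin
`|u n| ≥ ε + Δ` up to time `N` and the accumulated noise satisfies
`|σ * ∑_{k=1}^n ξ k| ≤ Δ / (2α)` for all `1 ≤ n ≤ N`, then the perturbed dynamics `v`
started at `v 0 = u 0` satisfies, for every `n ≤ N`:
`v n - u n = -α * σ * ∑_{k=1}^n ξ k`, `sgn (v n) = sgn (u n)`, and
`|v n| ≥ ε + Δ/2 > ε`. -/
theorem perturbed_sign_dynamics_shadowing
    (α σ ε Δ : ℝ) (hα : 0 < α) (hσ : 0 < σ) (hε : 0 < ε) (hΔ : 0 < Δ)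
    (N : ℕ) (u v : ℕ → ℝ) (ξ : ℕ → ℝ)
    (hu : ∀ n < N, u (n + 1) = u n - α * sgn (u n))
    (humargin : ∀ n ≤ N, ε + Δ ≤ |u n|)
    (hξ : ∀ n, 1 ≤ n → n ≤ N → |σ * ∑ k ∈ Finset.Icc 1 n, ξ k| ≤ Δ / (2 * α))
    (hv0 : v 0 = u 0)
    (hv : ∀ n < N, v (n + 1) = v n - α * (sgn (v n) + σ * ξ (n + 1))) :
    ∀ n ≤ N, v n - u n = -α * σ * ∑ k ∈ Finset.Icc 1 n, ξ k ∧
      sgn (v n) = sgn (u n) ∧ ε + Δ / 2 ≤ |v n| ∧ ε < |v n| := by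
  -- helper: from the difference bound, derive sgn equality and margin
  have key : ∀ n ≤ N, v n - u n = -α * σ * ∑ k ∈ Finset.Icc 1 n, ξ k := by
    intro n hn
    induction n with
    | zero => simp [hv0]
    | succ m ih =>
      have hmN : m < N := hn
      have ihm := ih (le_of_lt hmN)
      -- sgn (v m) = sgn (u m)
      have hdiff : |v m - u m| ≤ Δ / 2 := by
        rcases Nat.eq_zero_or_pos m with rfl | hm1
        · simp [hv0]; positivity
        · have := hξ m hm1 (le_of_lt hmN)
          rw [ihm]
          have : |(-α * σ * ∑ k ∈ Finset.Icc 1 m, ξ k)| =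
              α * |σ * ∑ k ∈ Finset.Icc 1 m, ξ k| := by
            rw [show -α * σ * ∑ k ∈ Finset.Icc 1 m, ξ k =
              -(α * (σ * ∑ k ∈ Finset.Icc 1 m, ξ k)) by ring, abs_neg, abs_mul,
              abs_of_pos hα]
          rw [this]
          calc α * |σ * ∑ k ∈ Finset.Icc 1 m, ξ k| ≤ α * (Δ / (2 * α)) := by
                exact mul_le_mul_of_nonneg_left (hξ m hm1 (le_of_lt hmN)) hα.le
            _ = Δ / 2 := by field_simp
      have hmarg := humargin m (le_of_lt hmN)
      have hsgn : sgn (v m) = sgn (u m) := by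
        have hlt : |v m - u m| < |u m| := lt_of_le_of_lt hdiff (by linarith)
        rcases lt_trichotomy (u m) 0 with h | h | h
        · have : v m < 0 := by
            have := abs_lt.mp hlt
            rw [abs_of_neg h] at this
            linarith [this.2]
          simp [sgn, this, h, not_lt.mpr this.le, not_lt.mpr h.le]
        · exfalso; rw [h] at hmarg; simp at hmarg; linarith
        · have : 0 < v m := by
            have := abs_lt.mp hlt
            rw [abs_of_pos h] at this
            linarith [this.1]
          simp [sgn, this, h]
      have hsum : ∑ k ∈ Finset.Icc 1 (m + 1), ξ k =
          (∑ k ∈ Finset.Icc 1 m, ξ k) + ξ (m + 1) :=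
        Finset.sum_Icc_succ_top (by omega) _
      rw [hv m hmN, hu m hmN, hsgn, hsum]
      have : v m - u m = -α * σ * ∑ k ∈ Finset.Icc 1 m, ξ k := ihm
      linarith [this]
  intro n hn
  have hd := key n hn
  refine ⟨hd, ?_⟩
  have hdiff : |v n - u n| ≤ Δ / 2 := by
    rcases Nat.eq_zero_or_pos n with rfl | hn1
    · simp [hv0]; positivity
    · rw [hd]
      have : |(-α * σ * ∑ k ∈ Finset.Icc 1 n, ξ k)| =
          α * |σ * ∑ k ∈ Finset.Icc 1 n, ξ k| := by
        rw [show -α * σ * ∑ k ∈ Finset.Icc 1 n, ξ k =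
          -(α * (σ * ∑ k ∈ Finset.Icc 1 n, ξ k)) by ring, abs_neg, abs_mul,
          abs_of_pos hα]
      rw [this]
      calc α * |σ * ∑ k ∈ Finset.Icc 1 n, ξ k| ≤ α * (Δ / (2 * α)) :=
            mul_le_mul_of_nonneg_left (hξ n hn1 hn) hα.le
        _ = Δ / 2 := by field_simp
  have hmarg := humargin n hn
  have hvabs : ε + Δ / 2 ≤ |v n| := by
    have := abs_sub_abs_le_abs_sub (u n) (v n)
    rw [abs_sub_comm] at hdiff
    linarith
  refine ⟨?_, hvabs, by linarith⟩
  have hlt : |v n - u n| < |u n| := lt_of_le_of_lt hdiff (by linarith)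
  rcases lt_trichotomy (u n) 0 with h | h | h
  · have : v n < 0 := by
      have := abs_lt.mp hlt
      rw [abs_of_neg h] at this
      linarith [this.2]
    simp [sgn, this, h, not_lt.mpr this.le, not_lt.mpr h.le]
  · exfalso; rw [h] at hmarg; simp at hmarg; linarith
  · have : 0 < v n := by
      have := abs_lt.mp hlt
      rw [abs_of_pos h] at this
      linarith [this.1]
    simp [sgn, this, h]
end

section
/- Fix α > 0, ε > 0, Δ > 0, N ∈ ℕ (N ≥ 1), and w_0 ∈ ℝ. Assume the deterministic sign dynamics u_{n+1} = u_n − α·sign(u_n) started at u_0 = w_0 satisfies |u_n| ≥ ε + Δ for all n ≥ 0. Then for every σ > 0, the noisy sign dynamics (w_n^{(σ)}) started at w_0 satisfies P(T_ε^{(σ)} ≤ N) ≤ 4·N·α²·σ²/Δ², where T_ε^{(σ)} = inf{n ≥ 0 : |w_n^{(σ)}| ≤ ε}. In particular P(T_ε^{(σ)} > N) → 1 as σ → 0. -/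
/-!
While the rescaled noise `α σ |S_n|` stays below the margin `Δ`, the noisy iterate is within `Δ`
of the deterministic one, so both have the same sign and they differ by exactly `-α σ S_n`; in
particular `|w_n| > ε`. Hence reaching `[-ε, ε]` by time `N` forces
`max_{n ≤ N} |S_n| ≥ Δ / (α σ)`, and Kolmogorov's maximal inequality (Doob's inequality for the
submartingale `S_n²`) bounds the probability of that by `N α² σ² / Δ²`.
-/

open MeasureTheory ProbabilityTheory Filter

open Finset
open scoped ENNReal Topology

lemma sgn_eq_of_abs_sub_lt {a b : ℝ} (h : |b - a| < |a|) : sgn b = sgn a := by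
  obtain ⟨hlo, hhi⟩ := abs_lt.1 h
  rcases lt_trichotomy a 0 with ha | rfl | ha
  · rw [abs_of_neg ha] at hhi
    have hb : b < 0 := by linarith
    simp [sgn, ha, hb, not_lt.2 ha.le, not_lt.2 hb.le]
  · exact absurd h (by simp)
  · rw [abs_of_pos ha] at hlo
    have hb : 0 < b := by linarith
    simp [sgn, ha, hb]

section SignDynamics

variable {α σ : ℝ} {u w x : ℕ → ℝ}

theorem sub_eq_of_abs_mul_sum_lt (hw0 : w 0 = u 0) (hu : ∀ n, u (n + 1) = u n - α * sgn (u n))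
    (hw : ∀ n, w (n + 1) = w n - α * (sgn (w n) + σ * x (n + 1))) {N : ℕ}
    (hS : ∀ n < N, |α * σ * ∑ k ∈ range n, x (k + 1)| < |u n|) :
    ∀ n ≤ N, w n - u n = -(α * σ * ∑ k ∈ range n, x (k + 1)) := by
  intro n hn
  induction n with
  | zero => simp [hw0]
  | succ n ih =>
    have hdev := ih (by omega)
    have hsgn : sgn (w n) = sgn (u n) :=
      sgn_eq_of_abs_sub_lt (by rw [hdev, abs_neg]; exact hS n (by omega))
    rw [hw, hu, hsgn, sum_range_succ]
    linear_combination hdev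

theorem lt_abs_of_abs_mul_sum_lt {ε Δ : ℝ} (hε : 0 ≤ ε) (hw0 : w 0 = u 0)
    (hu : ∀ n, u (n + 1) = u n - α * sgn (u n))
    (hw : ∀ n, w (n + 1) = w n - α * (sgn (w n) + σ * x (n + 1)))
    (hmargin : ∀ n, ε + Δ ≤ |u n|) {N : ℕ}
    (hS : ∀ n ≤ N, |α * σ * ∑ k ∈ range n, x (k + 1)| < Δ) :
    ∀ n ≤ N, ε < |w n| := by
  have hdev := sub_eq_of_abs_mul_sum_lt hw0 hu hw (N := N) fun n hn =>
    (hS n hn.le).trans_le (by linarith [hmargin n])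
  intro n hn
  have hclose : |w n - u n| < Δ := by rw [hdev n hn, abs_neg]; exact hS n hn
  linarith [hmargin n, abs_sub_abs_le_abs_sub (u n) (w n), abs_sub_comm (w n) (u n)]

end SignDynamics

lemma ProbabilityTheory.HasLaw.memLp {Ω : Type*} [MeasurableSpace Ω] {P : Measure Ω}
    {X : Ω → ℝ} {μ : Measure ℝ} (hX : HasLaw X μ P) {p : ℝ≥0∞} (h : MemLp id p μ) :
    MemLp X p P :=
  (memLp_map_measure_iff aestronglyMeasurable_id hX.aemeasurable).1 (hX.map_eq ▸ h)

namespace MeasureTheory.Martingale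

variable {Ω : Type*} [MeasurableSpace Ω] {P : Measure Ω} [IsFiniteMeasure P]
  {ℱ : Filtration ℕ ‹MeasurableSpace Ω›} {f : ℕ → Ω → ℝ}

theorem submartingale_sq (hf : Martingale f ℱ P) (hL2 : ∀ n, MemLp (f n) 2 P) :
    Submartingale (fun n ω => f n ω ^ 2) ℱ P := by
  refine ⟨fun n => (hf.stronglyAdapted n).pow 2, fun i j hij => ?_,
    fun n => (hL2 n).integrable_sq⟩
  have hjensen := (even_two.convexOn_pow (𝕜 := ℝ)).map_condExp_le_univ (ℱ.le i)
    (continuous_pow 2).lowerSemicontinuous ((hL2 j).integrable one_le_two) (hL2 j).integrable_sq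
  filter_upwards [hjensen, hf.condExp_ae_eq hij] with ω hω hcond
  rw [Function.comp_apply, hcond] at hω
  exact hω

theorem maximal_ineq_sq (hf : Martingale f ℱ P) (hL2 : ∀ n, MemLp (f n) 2 P) (N : ℕ) {t : ℝ}
    (ht : 0 < t) :
    P {ω | ∃ n ≤ N, t ≤ |f n ω|} ≤ ENNReal.ofReal (P[fun ω => f N ω ^ 2] / t ^ 2) := by
  set M := fun ω => (range (N + 1)).sup' nonempty_range_add_one fun k => f k ω ^ 2
  have hdoob : ENNReal.ofReal (t ^ 2) * P {ω | t ^ 2 ≤ M ω}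
      ≤ ENNReal.ofReal (∫ ω in {ω | t ^ 2 ≤ M ω}, f N ω ^ 2 ∂P) := by
    have h := maximal_ineq (hf.submartingale_sq hL2) (fun n ω => sq_nonneg (f n ω))
      (ε := (t ^ 2).toNNReal) N
    rwa [Real.coe_toNNReal _ (sq_nonneg t)] at h
  have hsubset : {ω | ∃ n ≤ N, t ≤ |f n ω|} ⊆ {ω | t ^ 2 ≤ M ω} := by
    rintro ω ⟨n, hn, hle⟩
    calc t ^ 2 ≤ f n ω ^ 2 := by simpa [sq_abs] using pow_le_pow_left₀ ht.le hle 2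
      _ ≤ M ω := le_sup' (fun k => f k ω ^ 2) (mem_range.2 (by omega))
  have hrestrict : ∫ ω in {ω | t ^ 2 ≤ M ω}, f N ω ^ 2 ∂P ≤ P[fun ω => f N ω ^ 2] :=
    setIntegral_le_integral (hL2 N).integrable_sq (.of_forall fun ω => sq_nonneg _)
  rw [ENNReal.ofReal_div_of_pos (by positivity)]
  refine (measure_mono hsubset).trans ?_
  rw [ENNReal.le_div_iff_mul_le (by simp [ht.ne']) (by simp), mul_comm]
  exact hdoob.trans (ENNReal.ofReal_le_ofReal hrestrict)

end MeasureTheory.Martingale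

section PartialSums

variable {Ω : Type*}

-- The paper's `S_n = ξ_1 + ⋯ + ξ_n`: the noise is indexed from `1`, and `ξ 0` never enters.
noncomputable def partialSum (ξ : ℕ → Ω → ℝ) (n : ℕ) : Ω → ℝ :=
  ∑ k ∈ range n, ξ (k + 1)

lemma partialSum_apply (ξ : ℕ → Ω → ℝ) (n : ℕ) (ω : Ω) :
    partialSum ξ n ω = ∑ k ∈ range n, ξ (k + 1) ω :=
  sum_apply _ _ _

variable [MeasurableSpace Ω] {P : Measure Ω} [IsProbabilityMeasure P] {ξ : ℕ → Ω → ℝ}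

theorem martingale_partialSum (hsm : ∀ n, StronglyMeasurable (ξ n)) (hindep : iIndepFun ξ P)
    (hint : ∀ n, Integrable (ξ n) P) (hmean : ∀ n, P[ξ n] = 0) :
    Martingale (partialSum ξ) (Filtration.natural ξ hsm) P := by
  set ℱ := Filtration.natural ξ hsm
  have hadapted : StronglyAdapted ℱ (partialSum ξ) := fun n =>
    Finset.stronglyMeasurable_sum _ fun k hk =>
      (Filtration.stronglyAdapted_natural hsm (k + 1)).mono (ℱ.mono (by simp at hk; omega))
  have hSint : ∀ n, Integrable (partialSum ξ n) P := fun n =>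
    integrable_finsetSum' _ fun k _ => hint (k + 1)
  refine martingale_nat hadapted hSint fun n => ?_
  have hnext : P[ξ (n + 1) | ℱ n] =ᵐ[P] fun _ => 0 := by
    simpa [hmean] using hindep.condExp_natural_ae_eq_of_lt hsm n.lt_succ_self
  rw [show partialSum ξ (n + 1) = partialSum ξ n + ξ (n + 1) from sum_range_succ _ _]
  filter_upwards [condExp_add (m := ℱ n) (hSint n) (hint (n + 1)), hnext] with ω h1 h2
  simp [h1, h2, condExp_of_stronglyMeasurable (ℱ.le n) (hadapted n) (hSint n)]

theorem integral_partialSum_sq (hindep : iIndepFun ξ P) (hL2 : ∀ n, MemLp (ξ n) 2 P)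
    (hmean : ∀ n, P[ξ n] = 0) (N : ℕ) :
    P[fun ω => partialSum ξ N ω ^ 2] = ∑ k ∈ range N, Var[ξ (k + 1); P] := by
  have hSmean : P[partialSum ξ N] = 0 := by
    simp_rw [partialSum_apply]
    rw [integral_finsetSum _ fun k _ => (hL2 (k + 1)).integrable one_le_two]
    simp [hmean]
  have hSmeas : AEMeasurable (partialSum ξ N) P :=
    (memLp_finsetSum' _ fun k _ => hL2 (k + 1)).aestronglyMeasurable.aemeasurable
  calc P[fun ω => partialSum ξ N ω ^ 2] = Var[partialSum ξ N; P] :=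
        (variance_of_integral_eq_zero hSmeas hSmean).symm
    _ = ∑ k ∈ range N, Var[ξ (k + 1); P] :=
        IndepFun.variance_sum (fun k _ => hL2 (k + 1))
          fun i _ j _ hij => hindep.indepFun (by omega)

theorem kolmogorov_maximal_ineq (hmeas : ∀ n, Measurable (ξ n)) (hindep : iIndepFun ξ P)
    (hL2 : ∀ n, MemLp (ξ n) 2 P) (hmean : ∀ n, P[ξ n] = 0) (N : ℕ) {t : ℝ} (ht : 0 < t) :
    P {ω | ∃ n ≤ N, t ≤ |partialSum ξ n ω|}
      ≤ ENNReal.ofReal ((∑ k ∈ range N, Var[ξ (k + 1); P]) / t ^ 2) := by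
  have hM := martingale_partialSum (fun n => (hmeas n).stronglyMeasurable) hindep
    (fun n => (hL2 n).integrable one_le_two) hmean
  rw [← integral_partialSum_sq hindep hL2 hmean N]
  exact hM.maximal_ineq_sq (fun n => memLp_finsetSum' _ fun k _ => hL2 (k + 1)) N ht

theorem measure_exists_abs_le_le_of_margin (hmeas : ∀ n, Measurable (ξ n))
    (hindep : iIndepFun ξ P) (hL2 : ∀ n, MemLp (ξ n) 2 P) (hmean : ∀ n, P[ξ n] = 0)
    {α σ ε Δ : ℝ} (hασ : 0 < α * σ) (hε : 0 ≤ ε) (hΔ : 0 < Δ) {u : ℕ → ℝ} {w : ℕ → Ω → ℝ}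
    (hw0 : ∀ ω, w 0 ω = u 0) (hu : ∀ n, u (n + 1) = u n - α * sgn (u n))
    (hw : ∀ n ω, w (n + 1) ω = w n ω - α * (sgn (w n ω) + σ * ξ (n + 1) ω))
    (hmargin : ∀ n, ε + Δ ≤ |u n|) (N : ℕ) :
    P {ω | ∃ n ≤ N, |w n ω| ≤ ε}
      ≤ ENNReal.ofReal ((α * σ) ^ 2 * (∑ k ∈ range N, Var[ξ (k + 1); P]) / Δ ^ 2) := by
  have hsub : {ω | ∃ n ≤ N, |w n ω| ≤ ε} ⊆ {ω | ∃ n ≤ N, Δ / (α * σ) ≤ |partialSum ξ n ω|} :=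
    Set.ofPred_subset_ofPred.2 fun ω => by
      contrapose!
      intro hsmall
      refine lt_abs_of_abs_mul_sum_lt (w := (w · ω)) (x := (ξ · ω)) hε (hw0 ω) hu (hw · ω)
        hmargin fun n hn => ?_
      rw [abs_mul, abs_of_pos hασ, ← lt_div_iff₀' hασ, ← partialSum_apply]
      exact hsmall n hn
  refine (measure_mono hsub).trans ((kolmogorov_maximal_ineq hmeas hindep hL2 hmean N
    (div_pos hΔ hασ)).trans_eq ?_)
  congr 1
  field_simp

end PartialSums

theorem tendsto_measure_compl_of_le_ofReal {Ω : Type*} [MeasurableSpace Ω] {P : Measure Ω}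
    [IsProbabilityMeasure P] {ι : Type*} {l : Filter ι} {A : ι → Set Ω}
    {g : ι → ℝ} (hg : Tendsto g l (𝓝 0)) (hA : ∀ᶠ i in l, P (A i) ≤ ENNReal.ofReal (g i)) :
    Tendsto (fun i => P (A i)ᶜ) l (𝓝 1) := by
  have hA0 : Tendsto (fun i => P (A i)) l (𝓝 0) :=
    tendsto_of_tendsto_of_tendsto_of_le_of_le' tendsto_const_nhds
      (by simpa using ENNReal.tendsto_ofReal hg) (.of_forall fun _ => zero_le) hA
  have hcompl : ∀ i, 1 - P (A i) ≤ P (A i)ᶜ := fun i =>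
    tsub_le_iff_left.2 (by simpa using measure_univ_le_add_compl (A i) (μ := P))
  refine tendsto_of_tendsto_of_tendsto_of_le_of_le ?_ tendsto_const_nhds hcompl
    fun _ => prob_le_one
  simpa using ENNReal.Tendsto.sub tendsto_const_nhds hA0 (.inl ENNReal.one_ne_top)

theorem noisy_sign_dynamics_small_noise_general
    {Ω : Type*} [MeasurableSpace Ω] (P : Measure Ω) [IsProbabilityMeasure P]
    (α ε Δ : ℝ) (hα : 0 < α) (hε : 0 < ε) (hΔ : 0 < Δ)
    (N : ℕ) (w0 : ℝ)
    (ξ : ℕ → Ω → ℝ) (hξmeas : ∀ n, Measurable (ξ n))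
    (hξdist : ∀ n, Measure.map (ξ n) P = gaussianReal 0 1)
    (hξindep : iIndepFun ξ P)
    (u : ℕ → ℝ) (hu0 : u 0 = w0)
    (hu : ∀ n, u (n + 1) = u n - α * sgn (u n))
    (humargin : ∀ n, ε + Δ ≤ |u n|)
    (w : ℝ → ℕ → Ω → ℝ)
    (hw0 : ∀ σ ω, w σ 0 ω = w0)
    (hw : ∀ σ n ω, w σ (n + 1) ω = w σ n ω - α * (sgn (w σ n ω) + σ * ξ (n + 1) ω)) :
    (∀ σ : ℝ, 0 < σ →
      P {ω | ∃ n ≤ N, |w σ n ω| ≤ ε}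
        ≤ ENNReal.ofReal (4 * N * α ^ 2 * σ ^ 2 / Δ ^ 2)) ∧
    Tendsto (fun σ : ℝ => P {ω | ∀ n ≤ N, ε < |w σ n ω|})
      (nhdsWithin 0 (Set.Ioi 0)) (nhds 1) := by
  have hlaw (n : ℕ) : HasLaw (ξ n) (gaussianReal 0 1) P := ⟨(hξmeas n).aemeasurable, hξdist n⟩
  have hL2 (n : ℕ) : MemLp (ξ n) 2 P := (hlaw n).memLp (memLp_id_gaussianReal' 2 (by simp))
  have hmean (n : ℕ) : P[ξ n] = 0 := (hlaw n).integral_eq.trans integral_id_gaussianReal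
  have hvar (n : ℕ) : Var[ξ n; P] = 1 := (hlaw n).variance_eq.trans variance_id_gaussianReal
  have hbound (σ : ℝ) (hσ : 0 < σ) :
      P {ω | ∃ n ≤ N, |w σ n ω| ≤ ε} ≤ ENNReal.ofReal (4 * N * α ^ 2 * σ ^ 2 / Δ ^ 2) := by
    refine (measure_exists_abs_le_le_of_margin hξmeas hξindep hL2 hmean (mul_pos hα hσ) hε.le hΔ
      (fun ω => (hw0 σ ω).trans hu0.symm) hu (hw σ) humargin N).trans
      (ENNReal.ofReal_le_ofReal ?_)
    simp only [hvar, sum_const, card_range, nsmul_eq_mul, mul_one]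
    gcongr ?_ / _
    nlinarith [sq_nonneg (α * σ), N.cast_nonneg (α := ℝ)]
  refine ⟨hbound, ?_⟩
  have hcompl (σ : ℝ) :
      {ω | ∀ n ≤ N, ε < |w σ n ω|} = {ω | ∃ n ≤ N, |w σ n ω| ≤ ε}ᶜ := by
    ext; simp
  simp_rw [hcompl]
  refine tendsto_measure_compl_of_le_ofReal ?_ (eventually_nhdsWithin_of_forall hbound)
  exact ((Continuous.tendsto (by fun_prop) 0).mono_left nhdsWithin_le_nhds).trans (by simp)

/-- Small-noise regime: if the deterministic sign dynamics `u` started at `w0` keeps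
margin `|u n| ≥ ε + Δ` for all `n`, then for every noise level `σ > 0`, the noisy sign
dynamics `w σ` started at `w0` (driven by i.i.d. standard Gaussians) satisfies
`P(T_ε ≤ N) ≤ 4 N α² σ² / Δ²`; in particular `P(T_ε > N) → 1` as `σ → 0⁺`. -/
theorem noisy_sign_dynamics_small_noise
    {Ω : Type*} [MeasurableSpace Ω] (P : Measure Ω) [IsProbabilityMeasure P]
    (α ε Δ : ℝ) (hα : 0 < α) (hε : 0 < ε) (hΔ : 0 < Δ)
    (N : ℕ) (hN : 1 ≤ N) (w0 : ℝ)
    (ξ : ℕ → Ω → ℝ) (hξmeas : ∀ n, Measurable (ξ n))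
    (hξdist : ∀ n, Measure.map (ξ n) P = gaussianReal 0 1)
    (hξindep : iIndepFun ξ P)
    (u : ℕ → ℝ) (hu0 : u 0 = w0)
    (hu : ∀ n, u (n + 1) = u n - α * sgn (u n))
    (humargin : ∀ n, ε + Δ ≤ |u n|)
    (w : ℝ → ℕ → Ω → ℝ)
    (hw0 : ∀ σ ω, w σ 0 ω = w0)
    (hw : ∀ σ n ω, w σ (n + 1) ω = w σ n ω - α * (sgn (w σ n ω) + σ * ξ (n + 1) ω)) :
    (∀ σ : ℝ, 0 < σ →
      P {ω | ∃ n ≤ N, |w σ n ω| ≤ ε}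
        ≤ ENNReal.ofReal (4 * N * α ^ 2 * σ ^ 2 / Δ ^ 2)) ∧
    Tendsto (fun σ : ℝ => P {ω | ∀ n ≤ N, ε < |w σ n ω|})
      (nhdsWithin 0 (Set.Ioi 0)) (nhds 1) :=
  noisy_sign_dynamics_small_noise_general P α ε Δ hα hε hΔ N w0 ξ hξmeas hξdist hξindep u hu0 hu
    humargin w hw0 hw
end

section
/- Fix α > 0, σ > 0, ε > 0, N ∈ ℕ (N ≥ 1), and w_0 ∈ ℝ with |w_0| > ε. Then the noisy sign dynamics (w_n) started at w_0 satisfies P(T_ε ≤ N) ≤ 2·N·ε/(α·σ·√(2π)), where T_ε = inf{n ≥ 0 : |w_n| ≤ ε}. Consequently P(T_ε > N) → 1 as σ → ∞. The key step is that for each k ≥ 1, almost surely P(|w_k| ≤ ε | ℱ_{k−1}) ≤ 2ε/(α·σ·√(2π)), since conditionally on ℱ_{k−1} the iterate w_k is Gaussian with standard deviation ασ. -/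
open MeasureTheory ProbabilityTheory Filter

/-!
Conditionally on `ξ₁, …, ξₙ`, the iterate `w (n + 1) = (wₙ - α sgn wₙ) - ασ ξₙ₊₁` is a Gaussian
of standard deviation `ασ` around a known centre, and a Gaussian density is bounded by
`1 / (ασ √(2π))`; hence `P(|w (n + 1)| ≤ ε) ≤ 2ε / (ασ √(2π))` for every `n`. As `|w₀| > ε`,
a union bound over `n = 1, …, N` gives the estimate, which tends to `0` as `σ → ∞`.
-/

open Real
open scoped ENNReal NNReal

@[fun_prop]
lemma measurable_sgn : Measurable sgn :=
  Measurable.ite measurableSet_Ioi measurable_const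
    (Measurable.ite measurableSet_Iio measurable_const measurable_const)

lemma gaussianPDFReal_le (μ : ℝ) (v : ℝ≥0) (x : ℝ) :
    gaussianPDFReal μ v x ≤ (√(2 * π * v))⁻¹ :=
  mul_le_of_le_one_right (by positivity) <| Real.exp_le_one_iff.2 <|
    div_nonpos_of_nonpos_of_nonneg (neg_nonpos.2 (sq_nonneg _)) (by positivity)

lemma gaussianReal_le_mul_volume (μ : ℝ) {v : ℝ≥0} (hv : v ≠ 0) (s : Set ℝ) :
    gaussianReal μ v s ≤ ENNReal.ofReal (√(2 * π * v))⁻¹ * volume s := by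
  rw [gaussianReal_apply μ hv, ← setLIntegral_const]
  exact lintegral_mono fun x => ENNReal.ofReal_le_ofReal (gaussianPDFReal_le μ v x)

namespace ProbabilityTheory

variable {Ω α β : Type*} [MeasurableSpace Ω] [MeasurableSpace α] [MeasurableSpace β]
  {P : Measure Ω} [IsProbabilityMeasure P]

lemma IndepFun.measure_preimage_le_of_section_le {X : Ω → α} {Y : Ω → β}
    (hX : Measurable X) (hY : Measurable Y) (hXY : IndepFun X Y P)
    {S : Set (α × β)} (hS : MeasurableSet S) {b : ℝ≥0∞}
    (hb : ∀ x, P.map Y (Prod.mk x ⁻¹' S) ≤ b) :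
    P ((fun ω => (X ω, Y ω)) ⁻¹' S) ≤ b := by
  have := Measure.isProbabilityMeasure_map (μ := P) hX.aemeasurable
  calc P ((fun ω => (X ω, Y ω)) ⁻¹' S) = (P.map X).prod (P.map Y) S := by
        rw [← (indepFun_iff_map_prod_eq_prod_map_map hX.aemeasurable hY.aemeasurable).1 hXY,
          Measure.map_apply (hX.prodMk hY) hS]
    _ = ∫⁻ x, P.map Y (Prod.mk x ⁻¹' S) ∂P.map X := Measure.prod_apply hS
    _ ≤ ∫⁻ _, b ∂P.map X := lintegral_mono hb
    _ = b := by simp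

lemma IndepFun.measure_abs_sub_mul_le_le {X Y : Ω → ℝ}
    (hX : Measurable X) (hY : Measurable Y) (hXY : IndepFun X Y P)
    {μ : ℝ} {v : ℝ≥0} (hv : v ≠ 0) (hYlaw : P.map Y = gaussianReal μ v)
    {c : ℝ} (hc : 0 < c) (ε : ℝ) :
    P {ω | |X ω - c * Y ω| ≤ ε} ≤ ENNReal.ofReal (2 * ε / (c * √(2 * π * v))) := by
  have hS : MeasurableSet {p : ℝ × ℝ | |p.1 - c * p.2| ≤ ε} :=
    measurableSet_le (by fun_prop) measurable_const
  refine hXY.measure_preimage_le_of_section_le hX hY hS fun x => ?_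
  have hsection : Prod.mk x ⁻¹' {p : ℝ × ℝ | |p.1 - c * p.2| ≤ ε}
      = Set.Icc ((x - ε) / c) ((x + ε) / c) := by
    ext y
    simp only [Set.mem_preimage, Set.mem_ofPred_eq, Set.mem_Icc, abs_le,
      div_le_iff₀ hc, le_div_iff₀ hc]
    constructor <;> rintro ⟨h₁, h₂⟩ <;> constructor <;> linarith
  calc P.map Y (Prod.mk x ⁻¹' _)
      ≤ ENNReal.ofReal (√(2 * π * v))⁻¹ * volume (Set.Icc ((x - ε) / c) ((x + ε) / c)) := by
        rw [hYlaw, hsection]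
        exact gaussianReal_le_mul_volume μ hv _
    _ = ENNReal.ofReal (2 * ε / (c * √(2 * π * v))) := by
        rw [Real.volume_Icc, ← ENNReal.ofReal_mul (by positivity)]
        congr 1
        field_simp
        ring

end ProbabilityTheory

section NaturalFiltration

variable {Ω : Type*} [MeasurableSpace Ω] {ξ : ℕ → Ω → ℝ}

lemma measurable_natural_of_recursion (hξ : ∀ n, StronglyMeasurable (ξ n)) {F : ℝ → ℝ → ℝ}
    (hF : Measurable (Function.uncurry F))
    {w : ℕ → Ω → ℝ} {w0 : ℝ} (hw0 : ∀ ω, w 0 ω = w0)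
    (hw : ∀ n ω, w (n + 1) ω = F (w n ω) (ξ (n + 1) ω)) (n : ℕ) :
    Measurable[Filtration.natural ξ hξ n] (w n) := by
  induction n with
  | zero => simp only [funext hw0, measurable_const]
  | succ n ih =>
    rw [funext (hw n)]
    exact hF.comp ((ih.mono (Filtration.mono _ n.le_succ) le_rfl).prodMk
      (Filtration.stronglyAdapted_natural hξ (n + 1)).measurable)

lemma ProbabilityTheory.iIndepFun.indepFun_of_measurable_natural
    (hξ : ∀ n, StronglyMeasurable (ξ n))
    {P : Measure Ω} (hind : iIndepFun ξ P)
    {X : Ω → ℝ} {i j : ℕ} (hij : i < j) (hX : Measurable[Filtration.natural ξ hξ i] X) :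
    IndepFun X (ξ j) P := by
  rw [IndepFun_iff_Indep]
  exact indep_of_indep_of_le_left (hind.indep_comap_natural_of_lt hξ hij).symm hX.comap_le

end NaturalFiltration

lemma tendsto_measure_compl_one {Ω ι : Type*} [MeasurableSpace Ω] {P : Measure Ω}
    [IsProbabilityMeasure P] {l : Filter ι} {A : ι → Set Ω} {b : ι → ℝ≥0∞}
    (hb : Tendsto b l (nhds 0)) (hA : ∀ᶠ i in l, P (A i) ≤ b i) :
    Tendsto (fun i => P (A i)ᶜ) l (nhds 1) := by
  have hlower : Tendsto (fun i => 1 - b i) l (nhds 1) := by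
    simpa using ENNReal.Tendsto.sub tendsto_const_nhds hb (Or.inl ENNReal.one_ne_top)
  refine tendsto_of_tendsto_of_tendsto_of_le_of_le' hlower tendsto_const_nhds ?_
    (Eventually.of_forall fun _ => prob_le_one)
  filter_upwards [hA] with i hi
  calc 1 - b i ≤ 1 - P (A i) := tsub_le_tsub_left hi 1
    _ ≤ P (A i)ᶜ :=
      tsub_le_iff_left.2 (by simpa using measure_univ_le_add_compl (μ := P) (A i))

lemma measure_exists_le_le_sum_succ {Ω : Type*} [MeasurableSpace Ω] (P : Measure Ω)
    {A : ℕ → Set Ω} (hA0 : A 0 = ∅) (N : ℕ) :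
    P {ω | ∃ n ≤ N, ω ∈ A n} ≤ ∑ k ∈ Finset.range N, P (A (k + 1)) := by
  refine (measure_mono fun ω hω => ?_).trans (measure_biUnion_finset_le _ _)
  obtain ⟨_ | k, hkN, hk⟩ := hω
  · simp [hA0] at hk
  · exact Set.mem_biUnion (Finset.mem_range.2 (by omega)) hk

section NoisySign

variable {Ω : Type*} [MeasurableSpace Ω] {P : Measure Ω} [IsProbabilityMeasure P]
  {α σ ε w0 : ℝ} {ξ : ℕ → Ω → ℝ} {w : ℕ → Ω → ℝ}

lemma measure_abs_noisySign_succ_le (hα : 0 < α) (hσ : 0 < σ)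
    (hξmeas : ∀ n, Measurable (ξ n)) (hξdist : ∀ n, P.map (ξ n) = gaussianReal 0 1)
    (hξindep : iIndepFun ξ P) (hw0 : ∀ ω, w 0 ω = w0)
    (hw : ∀ n ω, w (n + 1) ω = w n ω - α * (sgn (w n ω) + σ * ξ (n + 1) ω)) (n : ℕ) :
    P {ω | |w (n + 1) ω| ≤ ε} ≤ ENNReal.ofReal (2 * ε / (α * σ * √(2 * π))) := by
  have hξ n : StronglyMeasurable (ξ n) := (hξmeas n).stronglyMeasurable
  have hwn := measurable_natural_of_recursion hξ
    (F := fun x z => x - α * (sgn x + σ * z)) (by fun_prop) hw0 hw n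
  have hX : Measurable[Filtration.natural ξ hξ n] fun ω => w n ω - α * sgn (w n ω) :=
    hwn.sub ((measurable_sgn.comp hwn).const_mul α)
  have hset : {ω | |w (n + 1) ω| ≤ ε}
      = {ω | |(w n ω - α * sgn (w n ω)) - α * σ * ξ (n + 1) ω| ≤ ε} := by
    ext ω
    simp only [Set.mem_ofPred_eq, hw]
    ring_nf
  rw [hset]
  simpa using (hξindep.indepFun_of_measurable_natural hξ n.lt_succ_self hX
    ).measure_abs_sub_mul_le_le (hX.mono (Filtration.le _ n) le_rfl) (hξmeas _) one_ne_zero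
      (hξdist _) (mul_pos hα hσ) ε

lemma measure_exists_abs_noisySign_le_le (hα : 0 < α) (hσ : 0 < σ) (hw0abs : ε < |w0|)
    (hξmeas : ∀ n, Measurable (ξ n)) (hξdist : ∀ n, P.map (ξ n) = gaussianReal 0 1)
    (hξindep : iIndepFun ξ P) (hw0 : ∀ ω, w 0 ω = w0)
    (hw : ∀ n ω, w (n + 1) ω = w n ω - α * (sgn (w n ω) + σ * ξ (n + 1) ω)) (N : ℕ) :
    P {ω | ∃ n ≤ N, |w n ω| ≤ ε} ≤ ENNReal.ofReal (2 * N * ε / (α * σ * √(2 * π))) := by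
  refine (measure_exists_le_le_sum_succ P (A := fun n => {ω | |w n ω| ≤ ε})
    (by simp [hw0, hw0abs.not_ge]) N).trans ?_
  refine (Finset.sum_le_sum fun n _ =>
    measure_abs_noisySign_succ_le hα hσ hξmeas hξdist hξindep hw0 hw n).trans_eq ?_
  rw [Finset.sum_const, Finset.card_range, nsmul_eq_mul, ← ENNReal.ofReal_natCast,
    ← ENNReal.ofReal_mul (Nat.cast_nonneg N)]
  ring_nf

end NoisySign

theorem noisy_sign_dynamics_large_noise_general
    {Ω : Type*} [MeasurableSpace Ω] (P : Measure Ω) [IsProbabilityMeasure P]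
    (α ε : ℝ) (hα : 0 < α)
    (N : ℕ) (w0 : ℝ) (hw0abs : ε < |w0|)
    (ξ : ℕ → Ω → ℝ) (hξmeas : ∀ n, Measurable (ξ n))
    (hξdist : ∀ n, Measure.map (ξ n) P = gaussianReal 0 1)
    (hξindep : iIndepFun ξ P)
    (w : ℝ → ℕ → Ω → ℝ)
    (hw0 : ∀ σ ω, w σ 0 ω = w0)
    (hw : ∀ σ n ω, w σ (n + 1) ω = w σ n ω - α * (sgn (w σ n ω) + σ * ξ (n + 1) ω)) :
    (∀ σ : ℝ, 0 < σ →
      P {ω | ∃ n ≤ N, |w σ n ω| ≤ ε}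
        ≤ ENNReal.ofReal (2 * N * ε / (α * σ * Real.sqrt (2 * Real.pi)))) ∧
    Tendsto (fun σ : ℝ => P {ω | ∀ n ≤ N, ε < |w σ n ω|}) atTop (nhds 1) := by
  have bound (σ : ℝ) (hσ : 0 < σ) := measure_exists_abs_noisySign_le_le (ε := ε) hα hσ
    hw0abs hξmeas hξdist hξindep (hw0 σ) (hw σ) N
  have hlim : Tendsto (fun σ : ℝ => 2 * N * ε / (α * σ * √(2 * π))) atTop (nhds 0) :=
    tendsto_const_nhds.div_atTop
      ((tendsto_id.const_mul_atTop hα).atTop_mul_const (by positivity))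
  refine ⟨bound, (tendsto_measure_compl_one (by simpa using ENNReal.tendsto_ofReal hlim)
    ((eventually_gt_atTop 0).mono bound)).congr fun σ => ?_⟩
  congr 1
  ext ω
  simp

/-- Large-noise regime: for `|w0| > ε`, the noisy sign dynamics `w σ` started at `w0`
(driven by i.i.d. standard Gaussians) satisfies
`P(T_ε ≤ N) ≤ 2 N ε / (α σ √(2π))` for every `σ > 0`; consequently
`P(T_ε > N) → 1` as `σ → ∞`. -/
theorem noisy_sign_dynamics_large_noise
    {Ω : Type*} [MeasurableSpace Ω] (P : Measure Ω) [IsProbabilityMeasure P]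
    (α ε : ℝ) (hα : 0 < α) (hε : 0 < ε)
    (N : ℕ) (hN : 1 ≤ N) (w0 : ℝ) (hw0abs : ε < |w0|)
    (ξ : ℕ → Ω → ℝ) (hξmeas : ∀ n, Measurable (ξ n))
    (hξdist : ∀ n, Measure.map (ξ n) P = gaussianReal 0 1)
    (hξindep : iIndepFun ξ P)
    (w : ℝ → ℕ → Ω → ℝ)
    (hw0 : ∀ σ ω, w σ 0 ω = w0)
    (hw : ∀ σ n ω, w σ (n + 1) ω = w σ n ω - α * (sgn (w σ n ω) + σ * ξ (n + 1) ω)) :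
    (∀ σ : ℝ, 0 < σ →
      P {ω | ∃ n ≤ N, |w σ n ω| ≤ ε}
        ≤ ENNReal.ofReal (2 * N * ε / (α * σ * Real.sqrt (2 * Real.pi)))) ∧
    Tendsto (fun σ : ℝ => P {ω | ∀ n ≤ N, ε < |w σ n ω|}) atTop (nhds 1) :=
  noisy_sign_dynamics_large_noise_general P α ε hα N w0 hw0abs ξ hξmeas hξdist hξindep w hw0 hw
end
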